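/- For all natural numbers m, the number of 2m-step closed walks at vertex 1 in the half-line graph ℤ₊ equals C(2m,m) − C(2m,m+2) = C_{m+1}, the (m+1)-st Catalan number. -/

import Mathlib

/-- The half-line graph on `ℕ = {0,1,2,...}`: `x ∼ y` iff `|x - y| = 1`. -/
def latN : SimpleGraph ℕ where
  Adj x y := |(x : ℤ) - y| = 1
  symm := ⟨by intro x y h; rwa [abs_sub_comm]⟩
  loopless := ⟨by intro x h; simp at h⟩

/-- The number of `m`-step closed walks at `o` in `G`. -/
noncomputable def walkCount {V : Type*} (G : SimpleGraph V) (o : V) (m : ℕ) : ℕ :=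
  Nat.card {w : G.Walk o o // w.length = m}

/-!
Recording a walk on `ℤ₊` by its up and down steps identifies the closed walks at `0` of length
`2n` with the Dyck words of semilength `n`. As `1` is the only neighbour of `0`, the closed walks
at `1` of length `2m` are the closed walks at `0` of length `2m + 2` with their first and last
steps removed, so there are `C_{m+1}` of them. Pascal's rule, applied twice, turns
`C_{m+1} = C(2m+2, m+1) - C(2m+2, m+2)` into `C(2m, m) - C(2m, m+2)`.
-/

theorem catalan_eq_choose_sub_choose (n : ℕ) :
    catalan n = (2 * n).choose n - (2 * n).choose (n + 1) := by
  have hcat : (n + 1) * catalan n = (2 * n).choose n := succ_mul_catalan_eq_centralBinom n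
  have hsucc : (2 * n).choose (n + 1) * (n + 1) = (2 * n).choose n * n := by
    simpa [show 2 * n - n = n by omega] using Nat.choose_succ_right_eq (2 * n) n
  rw [← hcat] at hsucc ⊢
  refine (Nat.sub_eq_of_eq_add ?_).symm
  apply Nat.eq_of_mul_eq_mul_right (show 0 < n + 1 by omega)
  linarith [hsucc]

theorem catalan_succ_eq_choose_sub_choose (m : ℕ) :
    catalan (m + 1) = (2 * m).choose m - (2 * m).choose (m + 2) := calc
  catalan (m + 1) = (2 * m + 1 + 1).choose (m + 1) - (2 * m + 1 + 1).choose (m + 1 + 1) := by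
    rw [catalan_eq_choose_sub_choose]; ring_nf
  _ = (2 * m + 1).choose m - (2 * m + 1).choose (m + 1 + 1) := by
    rw [Nat.choose_succ_succ', Nat.choose_succ_succ' _ (m + 1)]; omega
  _ = (2 * m).choose m - (2 * m).choose (m + 1 + 1) := by
    rw [← Nat.choose_symm_half, Nat.choose_succ_succ', Nat.choose_succ_succ' _ (m + 1)]; omega

namespace SimpleGraph

variable {V : Type*} {G : SimpleGraph V}

theorem card_closedWalk_length_add_two_of_adj_iff {u v : V} (huv : ∀ w, G.Adj u w ↔ w = v)
    (n : ℕ) :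
    Nat.card {p : G.Walk u u // p.length = n + 2} = Nat.card {p : G.Walk v v // p.length = n} := by
  have h : G.Adj u v := (huv v).2 rfl
  symm
  refine Nat.card_eq_of_bijective
    (fun p => ⟨.cons h (p.1.concat h.symm), by simp [Walk.length_concat, p.2]⟩) ⟨?_, ?_⟩
  · rintro ⟨p, hp⟩ ⟨q, hq⟩ hpq
    simp only [Subtype.mk.injEq, Walk.cons.injEq, heq_eq_eq, true_and] at hpq
    obtain ⟨_, hpq⟩ := Walk.concat_inj hpq
    exact Subtype.ext (by simpa using hpq)
  · rintro ⟨p, hp⟩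
    obtain ⟨w, hw, q, rfl⟩ : ∃ (w : V) (hw : G.Adj u w) (q : G.Walk w u), p = .cons hw q := by
      cases p with
      | nil => simp at hp
      | cons hw q => exact ⟨_, hw, q, rfl⟩
    obtain rfl : v = w := ((huv w).1 hw).symm
    obtain ⟨x, hx, r, rfl⟩ : ∃ (x : V) (hx : G.Adj x u) (r : G.Walk v x), q = r.concat hx := by
      cases q with
      | nil => simp at hp
      | cons hy q => obtain ⟨x, r, hx, hr⟩ := Walk.exists_cons_eq_concat hy q; exact ⟨x, hx, r, hr⟩
    obtain rfl : v = x := ((huv x).1 hx.symm).symm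
    exact ⟨⟨r, by simpa [Walk.length_concat] using hp⟩, rfl⟩

end SimpleGraph

open DyckStep List

theorem latN_adj_iff {x y : ℕ} : latN.Adj x y ↔ y = x + 1 ∨ x = y + 1 := by
  change |(x : ℤ) - y| = 1 ↔ _
  rw [abs_eq zero_le_one]
  omega

theorem latN_adj_zero_iff (y : ℕ) : latN.Adj 0 y ↔ y = 1 := by
  rw [latN_adj_iff]
  omega

theorem DyckStep.count_U_add_count_D (l : List DyckStep) : l.count U + l.count D = l.length := by
  induction l with
  | nil => rfl
  | cons s l ih => cases s <;> simp <;> omega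

def dyckSteps : ∀ {x y : ℕ}, latN.Walk x y → List DyckStep
  | _, _, .nil => []
  | x, _, .cons (v := x') _ p => (if x < x' then U else D) :: dyckSteps p

theorem length_dyckSteps : ∀ {x y : ℕ} (p : latN.Walk x y), (dyckSteps p).length = p.length
  | _, _, .nil => rfl
  | _, _, .cons _ p => by simp [dyckSteps, length_dyckSteps p]

theorem count_D_dyckSteps_add : ∀ {x y : ℕ} (p : latN.Walk x y),
    (dyckSteps p).count D + y = (dyckSteps p).count U + x
  | _, _, .nil => rfl
  | _, _, .cons h p => by
    have ih := count_D_dyckSteps_add p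
    rcases latN_adj_iff.mp h with rfl | rfl <;> simp [dyckSteps] at ih ⊢ <;> omega

theorem count_D_take_dyckSteps_le : ∀ {x y : ℕ} (p : latN.Walk x y) (i : ℕ),
    ((dyckSteps p).take i).count D ≤ ((dyckSteps p).take i).count U + x
  | _, _, .nil, _ => by simp [dyckSteps]
  | _, _, .cons _ _, 0 => by simp
  | _, _, .cons h p, i + 1 => by
    have ih := count_D_take_dyckSteps_le p i
    rcases latN_adj_iff.mp h with rfl | rfl <;> simp [dyckSteps] at ih ⊢ <;> omega

theorem eq_of_dyckSteps_eq : ∀ {x y : ℕ} {p q : latN.Walk x y}, dyckSteps p = dyckSteps q → p = q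
  | _, _, .nil, .nil, _ => rfl
  | _, _, .nil, .cons _ _, h | _, _, .cons _ _, .nil, h => by simp [dyckSteps] at h
  | x, _, .cons (v := a) ha p, .cons (v := b) hb q, h => by
    simp only [dyckSteps, cons.injEq] at h
    obtain rfl : a = b := by
      have := latN_adj_iff.mp ha
      have := latN_adj_iff.mp hb
      grind
    rw [eq_of_dyckSteps_eq h.2]

-- Read as a lattice path started at height `x`, `l` never goes below `0` and ends at height `y`.
theorem exists_dyckSteps_eq : ∀ (l : List DyckStep) (x y : ℕ),
    (∀ i, (l.take i).count D ≤ (l.take i).count U + x) →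
    l.count D + y = l.count U + x → ∃ p : latN.Walk x y, dyckSteps p = l
  | [], x, y, _, hbal => by
    obtain rfl : y = x := by simpa using hbal
    exact ⟨.nil, rfl⟩
  | U :: l, x, y, hpre, hbal => by
    obtain ⟨p, hp⟩ := exists_dyckSteps_eq l (x + 1) y
      (fun i => by have := hpre (i + 1); simp at this; omega)
      (by simp at hbal; omega)
    exact ⟨.cons (latN_adj_iff.mpr (.inl rfl)) p, by simp [dyckSteps, hp]⟩
  | D :: l, x, y, hpre, hbal => by
    obtain ⟨x, rfl⟩ : ∃ x', x = x' + 1 := ⟨x - 1, by have := hpre 1; simp at this; omega⟩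
    obtain ⟨p, hp⟩ := exists_dyckSteps_eq l x y
      (fun i => by have := hpre (i + 1); simp at this; omega)
      (by simp at hbal; omega)
    exact ⟨.cons (latN_adj_iff.mpr (.inr rfl)) p, by simp [dyckSteps, hp]⟩

theorem card_closedWalk_zero_latN (n : ℕ) :
    Nat.card {p : latN.Walk 0 0 // p.length = 2 * n}
      = Nat.card {w : DyckWord // w.semilength = n} := by
  have hcount (p : latN.Walk 0 0) : (dyckSteps p).count U = (dyckSteps p).count D := by
    simpa using (count_D_dyckSteps_add p).symm
  refine Nat.card_eq_of_bijective (fun p => ⟨⟨dyckSteps p.1, hcount p.1,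
    by simpa using count_D_take_dyckSteps_le p.1⟩, ?_⟩) ⟨?_, ?_⟩
  · have hlen : (dyckSteps p.1).count U + (dyckSteps p.1).count D = 2 * n := by
      rw [count_U_add_count_D, length_dyckSteps, p.2]
    change (dyckSteps p.1).count U = n
    linarith [hcount p.1]
  · intro p q hpq
    exact Subtype.ext (eq_of_dyckSteps_eq (congrArg (DyckWord.toList ∘ Subtype.val) hpq))
  · rintro ⟨w, rfl⟩
    obtain ⟨p, hp⟩ := exists_dyckSteps_eq w.toList 0 0
      (by simpa using w.count_D_le_count_U) (by simpa using w.count_U_eq_count_D.symm)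
    refine ⟨⟨p, ?_⟩, Subtype.ext (DyckWord.ext hp)⟩
    rw [← length_dyckSteps, hp, ← w.two_mul_semilength_eq_length]

theorem walkCount_latN_one (m : ℕ) :
    walkCount latN 1 (2 * m) = Nat.choose (2 * m) m - Nat.choose (2 * m) (m + 2) ∧
      walkCount latN 1 (2 * m) = catalan (m + 1) := by
  have hcat : walkCount latN 1 (2 * m) = catalan (m + 1) := by
    rw [walkCount, ← SimpleGraph.card_closedWalk_length_add_two_of_adj_iff latN_adj_zero_iff,
      show 2 * m + 2 = 2 * (m + 1) by ring, card_closedWalk_zero_latN, Nat.card_eq_fintype_card,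
      DyckWord.card_dyckWord_semilength_eq_catalan]
  exact ⟨hcat.trans (catalan_succ_eq_choose_sub_choose m), hcat⟩
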